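/- Let d ≥ 1, let s = (s_1,…,s_d) be a scaling of positive integers, and let 0 < α < 1 < η < 2. Assume D ⊆ ℝ^d has the property that for each i ∈ {1,…,d} with s_i = 1, whenever x, y ∈ D then y + d(x,y)·e_i ∈ D. Then there exists a constant C depending only on d, s, α, η such that for every germ U over D and every R > 0: sup_{x∈D} [U_x]_{C^α(D ∩ B_R(x))} ≤ C (‖U‖_{G^η(D)} + [U]_{G^{η,α}(D)}) R^{η−α}, where [f]_{C^α(A)} := sup_{y,z∈A, y≠z} |f(y)−f(z)| / d(y,z)^α. -/

import Mathlib

open scoped BigOperators ENNReal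
open MeasureTheory

noncomputable section

namespace GermSchauder

variable {d : ℕ}

/-- Anisotropic distance determined by the scaling `s`. -/
def adist (s : Fin d → ℕ) (x y : Fin d → ℝ) : ℝ :=
  ∑ i, |x i - y i| ^ ((s i : ℝ)⁻¹)

/-- Anisotropic open ball of radius `R` around `x`. -/
def aball (s : Fin d → ℕ) (x : Fin d → ℝ) (R : ℝ) : Set (Fin d → ℝ) :=
  {y | adist s x y < R}

/-- `P` is a complex polynomial function on `ℝ^d` of anisotropic degree at most `k`. -/
def IsAnisoPoly (s : Fin d → ℕ) (k : ℝ) (P : (Fin d → ℝ) → ℂ) : Prop :=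
  ∃ p : MvPolynomial (Fin d) ℂ,
    (∀ γ ∈ p.support, ((∑ i, s i * γ i : ℕ) : ℝ) ≤ k) ∧
    ∀ z, P z = MvPolynomial.eval (fun j => (z j : ℂ)) p

/-- A germ over `D`: a family of functions continuous on `D`. -/
def IsGerm (D : Set (Fin d → ℝ)) (U : (Fin d → ℝ) → (Fin d → ℝ) → ℂ) : Prop :=
  ∀ x ∈ D, ContinuousOn (U x) D

/-- The `G^η(D)` norm of a germ, valued in `[0,∞]`. -/
def germNorm (s : Fin d → ℕ) (D : Set (Fin d → ℝ)) (η : ℝ)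
    (U : (Fin d → ℝ) → (Fin d → ℝ) → ℂ) : ℝ≥0∞ :=
  ⨅ M : {M : ℝ // 0 < M ∧ ∀ x ∈ D, ∀ y ∈ D,
      Norm.norm (U x y) ≤ M * adist s x y ^ η}, ENNReal.ofReal M.1

/-- The `G^{η,α}(D)` seminorm of a germ, valued in `[0,∞]`. -/
def germHA (s : Fin d → ℕ) (D : Set (Fin d → ℝ)) (η α : ℝ)
    (U : (Fin d → ℝ) → (Fin d → ℝ) → ℂ) : ℝ≥0∞ :=
  ⨅ M : {M : ℝ // 0 < M ∧ ∀ x ∈ D, ∀ y ∈ D, ∃ P : (Fin d → ℝ) → ℂ,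
      IsAnisoPoly s (⌊η⌋ : ℝ) P ∧ ∀ z ∈ D,
      Norm.norm (U x z - U y z - P z) ≤
        M * adist s y z ^ α * (adist s x y + adist s y z) ^ (η - α)}, ENNReal.ofReal M.1

/-- The anisotropic rescaling/recentering map `S^R_w`. -/
def smap (s : Fin d → ℕ) (R : ℝ) (w : Fin d → ℝ) (y : Fin d → ℝ) : Fin d → ℝ :=
  fun i => w i + R ^ (s i) * y i

/-- The action of `S^R_w` on germs. -/
def sgerm (s : Fin d → ℕ) (R : ℝ) (w : Fin d → ℝ)
    (U : (Fin d → ℝ) → (Fin d → ℝ) → ℂ) : (Fin d → ℝ) → (Fin d → ℝ) → ℂ :=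
  fun x y => U (smap s R w x) (smap s R w y)

/-- First order partial derivative in direction `j`. -/
def pderiv1 (j : Fin d) (φ : (Fin d → ℝ) → ℝ) : (Fin d → ℝ) → ℝ :=
  fun x => fderiv ℝ φ x (Pi.single j 1)

/-- Multi-index partial derivative `∂^β`. -/
def pderivM (β : Fin d → ℕ) (φ : (Fin d → ℝ) → ℝ) : (Fin d → ℝ) → ℝ :=
  (List.finRange d).foldr (fun j ψ => (pderiv1 j)^[β j] ψ) φ

/-- The class `ℬ_k` of test functions: `C^k`, supported in the unit anisotropic
ball, with all partial derivatives of anisotropic degree at most `k` bounded by one. -/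
structure TestB (s : Fin d → ℕ) (k : ℕ) where
  toFun : (Fin d → ℝ) → ℝ
  contDiff : ContDiff ℝ k toFun
  support_subset : Function.support toFun ⊆ aball s 0 1
  deriv_le : ∀ β : Fin d → ℕ, (∑ i, s i * β i) ≤ k → ∀ y, |pderivM β toFun y| ≤ 1

/-- The rescaled and recentered test function `φ_x^λ`. -/
def tscale (s : Fin d → ℕ) (φ : (Fin d → ℝ) → ℝ) (x : Fin d → ℝ) (lam : ℝ) :
    (Fin d → ℝ) → ℝ :=
  fun y => (lam ^ (∑ i, s i))⁻¹ * φ (fun i => (lam ^ s i)⁻¹ * (y i - x i))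

/-- Multi-indices of anisotropic degree exactly `m`. -/
def midxEq (s : Fin d → ℕ) (m : ℕ) : Finset (Fin d → ℕ) :=
  (Fintype.piFinset fun _ => Finset.range (m + 1)).filter fun γ => ∑ i, s i * γ i = m

/-- Multi-indices of anisotropic degree at most `η`. -/
def midxLe (s : Fin d → ℕ) (η : ℝ) : Finset (Fin d → ℕ) :=
  (Fintype.piFinset fun _ => Finset.range (⌊η⌋₊ + 1)).filter
    fun γ => ((∑ i, s i * γ i : ℕ) : ℝ) ≤ η

/-- The formal adjoint `𝓛*ψ` of `𝓛 = Σ_{|γ|=m} a_γ ∂^γ` applied to a real test function. -/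
def Lstar (s : Fin d → ℕ) (m : ℕ) (a : (Fin d → ℕ) → ℂ) (ψ : (Fin d → ℝ) → ℝ) :
    (Fin d → ℝ) → ℂ :=
  fun y => ∑ γ ∈ midxEq s m, ((-1 : ℂ) ^ (∑ i, γ i)) * a γ * (pderivM γ ψ y : ℂ)

/-- The distributional pairing `⟨𝓛f, ψ⟩ := ∫_D f ⋅ 𝓛*ψ`. -/
def Lpair (s : Fin d → ℕ) (m : ℕ) (a : (Fin d → ℕ) → ℂ) (D : Set (Fin d → ℝ))
    (f : (Fin d → ℝ) → ℂ) (ψ : (Fin d → ℝ) → ℝ) : ℂ :=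
  ∫ y in D, f y * Lstar s m a ψ y

/-- The negative Hölder norm of `𝓛f` on `A ⊆ D` (pairing integrals taken over `D`),
with exponent `β < 0`, i.e. the sup of `λ^{-β} |⟨𝓛f, φ_y^λ⟩|` over `φ ∈ ℬ_{⌈-β⌉}`,
`y ∈ A` and `λ > 0` with `B_λ(y) ⊆ A`. -/
def LnegOn (s : Fin d → ℕ) (m : ℕ) (a : (Fin d → ℕ) → ℂ) (D A : Set (Fin d → ℝ))
    (β : ℝ) (f : (Fin d → ℝ) → ℂ) : ℝ≥0∞ :=
  ⨆ φ : TestB s ⌈-β⌉₊, ⨆ y : A, ⨆ lam : {l : ℝ // 0 < l ∧ aball s y.1 l ⊆ A},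
    ENNReal.ofReal (lam.1 ^ (-β) *
      Norm.norm (Lpair s m a D f (tscale s φ.toFun y.1 lam.1)))

/-- The `G^{γ'}(D)` seminorm of the distributional germ `𝓛U`, for `γ' < 0`. -/
def LnegSemi (s : Fin d → ℕ) (m : ℕ) (a : (Fin d → ℕ) → ℂ) (D : Set (Fin d → ℝ))
    (γ' : ℝ) (U : (Fin d → ℝ) → (Fin d → ℝ) → ℂ) : ℝ≥0∞ :=
  ⨆ φ : TestB s ⌈-γ'⌉₊, ⨆ x : D, ⨆ lam : {l : ℝ // 0 < l ∧ aball s x.1 l ⊆ D},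
    ENNReal.ofReal (lam.1 ^ (-γ') *
      Norm.norm (Lpair s m a D (U x.1) (tscale s φ.toFun x.1 lam.1)))

/-- Ellipticity: the symbol `Σ_{|γ|=m} a_γ (iξ)^γ` does not vanish for `ξ ≠ 0`. -/
def IsElliptic (s : Fin d → ℕ) (m : ℕ) (a : (Fin d → ℕ) → ℂ) : Prop :=
  ∀ ξ : Fin d → ℝ, ξ ≠ 0 →
    (∑ γ ∈ midxEq s m, a γ * ∏ j, (Complex.I * (ξ j : ℂ)) ^ γ j) ≠ 0

open Classical in
/-- Coefficients of the Laplacian `Δ = Σ_j ∂_j^2`. -/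
def laplCoeff : (Fin d → ℕ) → ℂ :=
  fun γ => if ∃ j : Fin d, γ = Pi.single j 2 then 1 else 0

/-- Classical Hölder seminorm of a function on the set `A`, valued in `[0,∞]`. -/
def holderSemi (s : Fin d → ℕ) (A : Set (Fin d → ℝ)) (α : ℝ)
    (f : (Fin d → ℝ) → ℂ) : ℝ≥0∞ :=
  ⨆ y : A, ⨆ z : A, ⨆ _ : y.1 ≠ z.1,
    ENNReal.ofReal (Norm.norm (f y.1 - f z.1) / adist s y.1 z.1 ^ α)

/-- Polynomial-corrected Hölder seminorm of a function on the set `A`. -/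
def holderSemiP (s : Fin d → ℕ) (A : Set (Fin d → ℝ)) (α : ℝ)
    (f : (Fin d → ℝ) → ℂ) : ℝ≥0∞ :=
  ⨅ M : {M : ℝ // 0 < M ∧ ∀ y ∈ A, ∃ P : (Fin d → ℝ) → ℂ,
      IsAnisoPoly s (⌊α⌋ : ℝ) P ∧
      ∀ z ∈ A, Norm.norm (f z - P z) ≤ M * adist s z y ^ α}, ENNReal.ofReal M.1

/-! ### Parabolic setting -/

/-- The parabolic scaling on `ℝ^{1+d}`. -/
def spar (d : ℕ) : Fin (d + 1) → ℕ := Fin.cons 2 fun _ => 1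

/-- The adjoint heat operator `ψ ↦ -∂_t ψ - Δ_x ψ` (as a complex valued function). -/
def heatStar (d : ℕ) (ψ : (Fin (d + 1) → ℝ) → ℝ) : (Fin (d + 1) → ℝ) → ℂ :=
  fun y => ((- pderiv1 (0 : Fin (d + 1)) ψ y
    - ∑ j : Fin d, pderivM (Pi.single j.succ 2) ψ y : ℝ) : ℂ)

/-- Pairing `⟨(∂_t - Δ)f, ψ⟩ := ∫_D f ⋅ (-∂_t ψ - Δψ)`. -/
def heatPair (d : ℕ) (D : Set (Fin (d + 1) → ℝ)) (f : (Fin (d + 1) → ℝ) → ℂ)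
    (ψ : (Fin (d + 1) → ℝ) → ℝ) : ℂ :=
  ∫ y in D, f y * heatStar d ψ y

/-- The `G^{γ'}(D)` seminorm of `(∂_t - Δ)U` for `γ' < 0`. -/
def heatNegSemi (d : ℕ) (D : Set (Fin (d + 1) → ℝ)) (γ' : ℝ)
    (U : (Fin (d + 1) → ℝ) → (Fin (d + 1) → ℝ) → ℂ) : ℝ≥0∞ :=
  ⨆ φ : TestB (spar d) ⌈-γ'⌉₊, ⨆ x : D,
    ⨆ lam : {l : ℝ // 0 < l ∧ aball (spar d) x.1 l ⊆ D},
      ENNReal.ofReal (lam.1 ^ (-γ') *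
        Norm.norm (heatPair d D (U x.1) (tscale (spar d) φ.toFun x.1 lam.1)))

/-! ### Discrete setting -/

/-- The lattice point of `Λ_ε` indexed by `k ∈ ℤ^d`. -/
def latt (s : Fin d → ℕ) (ε : ℝ) (k : Fin d → ℤ) : Fin d → ℝ :=
  fun i => ε ^ (s i) * k i

/-- The lattice `Λ_ε = ε^{s_1}ℤ × ⋯ × ε^{s_d}ℤ` as a subset of `ℝ^d`. -/
def lattSet (s : Fin d → ℕ) (ε : ℝ) : Set (Fin d → ℝ) :=
  Set.range (latt s ε)

/-- Forward difference operator `D_{ε,j}`. -/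
def fdiff (s : Fin d → ℕ) (ε : ℝ) (j : Fin d) (u : (Fin d → ℝ) → ℂ) :
    (Fin d → ℝ) → ℂ :=
  fun k => (((ε ^ s j)⁻¹ : ℝ) : ℂ) * (u (k + (ε ^ s j) • (Pi.single j 1 : Fin d → ℝ)) - u k)

/-- Backward difference operator `D̄_{ε,j}`. -/
def bdiff (s : Fin d → ℕ) (ε : ℝ) (j : Fin d) (u : (Fin d → ℝ) → ℂ) :
    (Fin d → ℝ) → ℂ :=
  fun k => (((ε ^ s j)⁻¹ : ℝ) : ℂ) * (u k - u (k - (ε ^ s j) • (Pi.single j 1 : Fin d → ℝ)))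

/-- Iterated forward difference `D_ε^γ`. -/
def fdiffM (s : Fin d → ℕ) (ε : ℝ) (γ : Fin d → ℕ) (u : (Fin d → ℝ) → ℂ) :
    (Fin d → ℝ) → ℂ :=
  (List.finRange d).foldr (fun j v => (fdiff s ε j)^[γ j] v) u

/-- Iterated backward difference `D̄_ε^δ`. -/
def bdiffM (s : Fin d → ℕ) (ε : ℝ) (δ : Fin d → ℕ) (u : (Fin d → ℝ) → ℂ) :
    (Fin d → ℝ) → ℂ :=
  (List.finRange d).foldr (fun j v => (bdiff s ε j)^[δ j] v) u

/-- The discrete Laplacian `Δ_ε` (isotropic scaling). -/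
def discLap (ε : ℝ) (u : (Fin d → ℝ) → ℂ) : (Fin d → ℝ) → ℂ :=
  fun y => (((ε ^ 2)⁻¹ : ℝ) : ℂ) *
    ∑ j : Fin d, ((u (y + ε • (Pi.single j 1 : Fin d → ℝ)) - u y) + (u (y - ε • (Pi.single j 1 : Fin d → ℝ)) - u y))

/-- The discrete pairing `⟨f, g⟩_ε := ε^{s_1+⋯+s_d} Σ_{k ∈ Λ_ε} f(k) g(k)`. -/
def dpair (s : Fin d → ℕ) (ε : ℝ) (f : (Fin d → ℝ) → ℂ) (g : (Fin d → ℝ) → ℝ) : ℂ :=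
  ((ε ^ (∑ i, s i) : ℝ) : ℂ) * ∑' k : Fin d → ℤ, f (latt s ε k) * (g (latt s ε k) : ℂ)

/-- The discrete `G^{γ'}(Λ_ε)` seminorm of a germ `V` on `Λ_ε`, for `γ' < 0`. -/
def dnegSemi (s : Fin d → ℕ) (ε : ℝ) (γ' : ℝ)
    (V : (Fin d → ℝ) → (Fin d → ℝ) → ℂ) : ℝ≥0∞ :=
  ⨆ φ : TestB s ⌈-γ'⌉₊, ⨆ k : Fin d → ℤ, ⨆ lam : {l : ℝ // ε ≤ l},
    ENNReal.ofReal (lam.1 ^ (-γ') *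
      Norm.norm (dpair s ε (V (latt s ε k)) (tscale s φ.toFun (latt s ε k) lam.1)))

/-- Pairs of multi-indices with `|γ| + |δ| = m`. -/
def pairsEq (s : Fin d → ℕ) (m : ℕ) : Finset ((Fin d → ℕ) × (Fin d → ℕ)) :=
  ((Fintype.piFinset fun _ => Finset.range (m + 1)) ×ˢ
      (Fintype.piFinset fun _ => Finset.range (m + 1))).filter
    fun p => (∑ i, s i * p.1 i) + (∑ i, s i * p.2 i) = m

/-- The discrete difference operator `L_ε = Σ_{|γ|+|δ|=m} a_{γ,δ} D_ε^γ D̄_ε^δ`. -/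
def diffOpPair (s : Fin d → ℕ) (ε : ℝ) (m : ℕ)
    (a : (Fin d → ℕ) × (Fin d → ℕ) → ℂ) (u : (Fin d → ℝ) → ℂ) :
    (Fin d → ℝ) → ℂ :=
  fun y => ∑ p ∈ pairsEq s m, a p * fdiffM s ε p.1 (bdiffM s ε p.2 u) y

/-- The discrete symbol component `ξ^ε_{θ,j} = i ε^{-s_j} (1 - e^{i ε^{s_j} θ_j})`. -/
def xiSym (s : Fin d → ℕ) (ε : ℝ) (θ : Fin d → ℝ) (j : Fin d) : ℂ :=
  Complex.I * (((ε ^ s j)⁻¹ : ℝ) : ℂ) *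
    (1 - Complex.exp (Complex.I * ((ε ^ s j * θ j : ℝ) : ℂ)))

/-- The discrete symbol `L̂_ε(θ)`. -/
def Lhatε (s : Fin d → ℕ) (m : ℕ) (a : (Fin d → ℕ) × (Fin d → ℕ) → ℂ)
    (ε : ℝ) (θ : Fin d → ℝ) : ℂ :=
  ∑ p ∈ pairsEq s m, a p * (∏ j, (Complex.I * xiSym s ε θ j) ^ p.1 j) *
    (∏ j, (Complex.I * (starRingEnd ℂ) (xiSym s ε θ j)) ^ p.2 j)

/-- The continuous symbol `L̂(ξ) = Σ a_{γ,δ} (iξ)^{γ+δ}`. -/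
def LhatC (s : Fin d → ℕ) (m : ℕ) (a : (Fin d → ℕ) × (Fin d → ℕ) → ℂ)
    (ξ : Fin d → ℝ) : ℂ :=
  ∑ p ∈ pairsEq s m, a p * ∏ j, (Complex.I * (ξ j : ℂ)) ^ (p.1 j + p.2 j)

/-! ### Locally uniform seminorms -/

/-- The locally uniform supremum `‖U‖_{<R}`, valued in `[0,∞]`. -/
def germSup (s : Fin d → ℕ) (R : ℝ)
    (U : (Fin d → ℝ) → (Fin d → ℝ) → ℂ) : ℝ≥0∞ :=
  ⨆ p : {p : (Fin d → ℝ) × (Fin d → ℝ) // adist s p.1 p.2 < R},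
    ENNReal.ofReal (Norm.norm (U p.1.1 p.1.2))

/-- The locally uniform seminorm `[U]_{G_R^η}`. -/
def germNormLoc (s : Fin d → ℕ) (R η : ℝ)
    (U : (Fin d → ℝ) → (Fin d → ℝ) → ℂ) : ℝ≥0∞ :=
  ⨆ p : {p : (Fin d → ℝ) × (Fin d → ℝ) // 0 < adist s p.1 p.2 ∧ adist s p.1 p.2 < R},
    ENNReal.ofReal (Norm.norm (U p.1.1 p.1.2) / adist s p.1.1 p.1.2 ^ η)

/-- The locally uniform seminorm `[U]_{G_R^{η,α}}`. -/
def germHALoc (s : Fin d → ℕ) (R η α : ℝ)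
    (U : (Fin d → ℝ) → (Fin d → ℝ) → ℂ) : ℝ≥0∞ :=
  ⨆ p : {p : (Fin d → ℝ) × (Fin d → ℝ) // 0 < adist s p.1 p.2 ∧ adist s p.1 p.2 < R},
    ⨅ P : {P : (Fin d → ℝ) → ℂ // IsAnisoPoly s (⌊η⌋ : ℝ) P},
      ⨆ z : {z : Fin d → ℝ // 0 < adist s p.1.2 z ∧ adist s p.1.2 z < R},
        ENNReal.ofReal (Norm.norm (U p.1.1 z.1 - U p.1.2 z.1 - P.1 z.1) /
          (adist s p.1.2 z.1 ^ α * (adist s p.1.1 p.1.2 + adist s p.1.2 z.1) ^ (η - α)))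

/-- The locally uniform seminorm `[𝓛U]_{G_R^β}` for `β < 0` (pairings over all of `ℝ^d`). -/
def LnegSemiLoc (s : Fin d → ℕ) (m : ℕ) (a : (Fin d → ℕ) → ℂ) (R β : ℝ)
    (U : (Fin d → ℝ) → (Fin d → ℝ) → ℂ) : ℝ≥0∞ :=
  ⨆ φ : TestB s ⌈-β⌉₊, ⨆ x : Fin d → ℝ, ⨆ lam : {l : ℝ // 0 < l ∧ l < R},
    ENNReal.ofReal (lam.1 ^ (-β) *
      Norm.norm (Lpair s m a Set.univ (U x) (tscale s φ.toFun x lam.1)))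

/-!
Since `⌊η⌋ = 1` and every `s i ≥ 1`, the polynomial `P` that the `G^{η,α}` bound attaches to a
pair `(x, y)` is affine and involves only the coordinates with `s i = 1`. It agrees with `U x`
at `y` because `U y y = 0`, and evaluating it at the point `y + d(x,y) e_i`, which lies in `D`,
bounds its `i`-th coefficient by a multiple of `d(x,y)^(η-1)`. Writing
`U x y - U x z = (P y - P z) - U y z - (U x z - U y z - P z)`, each of the three terms is
`O(R^(η-α) d(y,z)^α)` as soon as `y, z ∈ B_R(x)`.
-/
section AnisotropicDistance

lemma adist_nonneg (s : Fin d → ℕ) (x y : Fin d → ℝ) : 0 ≤ adist s x y :=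
  Finset.sum_nonneg fun _ _ => Real.rpow_nonneg (abs_nonneg _) _

lemma adist_comm (s : Fin d → ℕ) (x y : Fin d → ℝ) : adist s x y = adist s y x := by
  simp only [adist, abs_sub_comm]

variable {s : Fin d → ℕ}

lemma adist_self (hs : ∀ i, 0 < s i) (x : Fin d → ℝ) : adist s x x = 0 :=
  Finset.sum_eq_zero fun i _ => by simp [(hs i).ne']

lemma adist_pos_of_ne {x y : Fin d → ℝ} (h : x ≠ y) : 0 < adist s x y := by
  obtain ⟨i, hi⟩ := Function.ne_iff.mp h
  exact Finset.sum_pos' (fun j _ => Real.rpow_nonneg (abs_nonneg _) _)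
    ⟨i, Finset.mem_univ i, Real.rpow_pos_of_pos (abs_pos.mpr (sub_ne_zero.mpr hi)) _⟩

lemma adist_triangle (hs : ∀ i, 0 < s i) (x y z : Fin d → ℝ) :
    adist s x z ≤ adist s x y + adist s y z := by
  rw [adist, adist, adist, ← Finset.sum_add_distrib]
  refine Finset.sum_le_sum fun i _ => ?_
  have hp : (0 : ℝ) ≤ (s i : ℝ)⁻¹ := by positivity
  calc |x i - z i| ^ (s i : ℝ)⁻¹ ≤ (|x i - y i| + |y i - z i|) ^ (s i : ℝ)⁻¹ :=
        Real.rpow_le_rpow (abs_nonneg _) (abs_sub_le _ _ _) hp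
    _ ≤ |x i - y i| ^ (s i : ℝ)⁻¹ + |y i - z i| ^ (s i : ℝ)⁻¹ :=
        Real.rpow_add_le_add_rpow (abs_nonneg _) (abs_nonneg _) hp
          (inv_le_one_of_one_le₀ (by exact_mod_cast hs i))

lemma abs_sub_le_adist {i : Fin d} (hsi : s i = 1) (x y : Fin d → ℝ) :
    |x i - y i| ≤ adist s x y := by
  simpa [adist, hsi] using Finset.single_le_sum (f := fun j => |x j - y j| ^ (s j : ℝ)⁻¹)
    (fun j _ => Real.rpow_nonneg (abs_nonneg _) _) (Finset.mem_univ i)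

lemma adist_add_smul_single (hs : ∀ i, 0 < s i) {i : Fin d} (hsi : s i = 1) {t : ℝ}
    (ht : 0 ≤ t) (y : Fin d → ℝ) : adist s y (y + t • Pi.single i 1) = t := by
  rw [adist, Finset.sum_eq_single i]
  · simp [hsi, abs_of_nonneg ht]
  · intro j _ hji
    simp [Pi.single_eq_of_ne hji, (hs j).ne']
  · simp

end AnisotropicDistance

lemma IsAnisoPoly.exists_affine {s : Fin d → ℕ} (hs : ∀ i, 0 < s i) {k : ℝ} (hk : k < 2)
    {P : (Fin d → ℝ) → ℂ} (hP : IsAnisoPoly s k P) :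
    ∃ (a : ℂ) (c : Fin d → ℂ), (∀ i, s i ≠ 1 → c i = 0) ∧ ∀ z, P z = a + ∑ i, c i * z i := by
  classical
  obtain ⟨p, hdeg, hPp⟩ := hP
  have hweight : ∀ γ ∈ p.support, ∑ i, s i * γ i ≤ 1 := fun γ hγ => by
    have := (hdeg γ hγ).trans_lt hk
    exact Nat.lt_succ_iff.mp (by exact_mod_cast this)
  have hsupp : ∀ γ ∈ p.support, γ = 0 ∨ ∃ i, γ = Finsupp.single i 1 := fun γ hγ => by
    have hle : γ.degree ≤ 1 := by
      rw [Finsupp.degree_eq_sum]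
      exact (Finset.sum_le_sum fun i _ => Nat.le_mul_of_pos_left _ (hs i)).trans (hweight γ hγ)
    rcases Nat.le_one_iff_eq_zero_or_eq_one.mp hle with h0 | h1
    · exact Or.inl ((Finsupp.degree_eq_zero_iff γ).mp h0)
    · exact Or.inr ((Finsupp.sum_eq_one_iff γ).mp h1)
  refine ⟨p.coeff 0, fun i => p.coeff (Finsupp.single i 1), fun i hsi => ?_, fun z => ?_⟩
  · by_contra h
    have := hweight _ (MvPolynomial.mem_support_iff.mpr h)
    simp [Finsupp.single_apply] at this
    have := hs i
    omega
  · have hsub : p.support ⊆ insert 0 (Finset.univ.image fun i => Finsupp.single i 1) :=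
      fun γ hγ => by rcases hsupp γ hγ with rfl | ⟨i, rfl⟩ <;> simp
    rw [hPp, MvPolynomial.eval_eq', Finset.sum_subset hsub fun γ _ hγ => by
        simp [MvPolynomial.notMem_support_iff.mp hγ],
      Finset.sum_insert (by simp), Finset.sum_image fun i _ j _ h =>
        Finsupp.single_left_injective one_ne_zero h]
    simp [Finsupp.single_apply, pow_ite]

lemma rpow_le_sq_mul_rpow {a b k e : ℝ} (ha : 0 ≤ a) (hab : a ≤ k * b) (hk : 1 ≤ k)
    (he : 0 ≤ e) (he2 : e ≤ 2) : a ^ e ≤ k ^ 2 * b ^ e := by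
  have hb : 0 ≤ b := nonneg_of_mul_nonneg_right (ha.trans hab) (by linarith)
  calc a ^ e ≤ (k * b) ^ e := Real.rpow_le_rpow ha hab he
    _ = k ^ e * b ^ e := Real.mul_rpow (by linarith) hb
    _ ≤ k ^ 2 * b ^ e := by
        gcongr
        simpa using Real.rpow_le_rpow_of_exponent_le hk he2

section GermEstimates

variable {s : Fin d → ℕ} {D : Set (Fin d → ℝ)} {U : (Fin d → ℝ) → (Fin d → ℝ) → ℂ}
  {P : (Fin d → ℝ) → ℂ} {α η M₁ M₂ : ℝ} {x y z : Fin d → ℝ}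

lemma germ_apply_self (hs : ∀ i, 0 < s i) (hη : 0 < η)
    (hU : ∀ x ∈ D, ∀ y ∈ D, ‖U x y‖ ≤ M₁ * adist s x y ^ η) (hx : x ∈ D) : U x x = 0 := by
  simpa [adist_self hs, Real.zero_rpow hη.ne'] using hU x hx x hx

lemma apply_eq_of_germ_sub_bound (hs : ∀ i, 0 < s i) (hα : 0 < α)
    (hP : ∀ z ∈ D, ‖U x z - U y z - P z‖ ≤
      M₂ * adist s y z ^ α * (adist s x y + adist s y z) ^ (η - α))
    (hy : y ∈ D) (hUy : U y y = 0) : P y = U x y := by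
  have := hP y hy
  simp only [adist_self hs, Real.zero_rpow hα.ne', mul_zero, zero_mul, norm_le_zero_iff,
    hUy, sub_zero, sub_eq_zero] at this
  exact this.symm

lemma sub_eq_sum_of_affine {a : ℂ} {c : Fin d → ℂ} (hPc : ∀ z, P z = a + ∑ j, c j * z j)
    (y z : Fin d → ℝ) : P y - P z = ∑ j, c j * ((y j - z j : ℝ) : ℂ) := by
  simp [hPc, mul_sub, Finset.sum_sub_distrib]

lemma norm_sub_le_of_affine {a : ℂ} {c : Fin d → ℂ} (hPc : ∀ z, P z = a + ∑ j, c j * z j)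
    (hc : ∀ i, s i ≠ 1 → c i = 0) {B : ℝ} (hB : 0 ≤ B) (hcB : ∀ i, s i = 1 → ‖c i‖ ≤ B)
    (y z : Fin d → ℝ) : ‖P y - P z‖ ≤ d * B * adist s y z := by
  calc ‖P y - P z‖ ≤ ∑ j, ‖c j * ((y j - z j : ℝ) : ℂ)‖ :=
        sub_eq_sum_of_affine hPc y z ▸ norm_sum_le _ _
    _ ≤ ∑ _j : Fin d, B * adist s y z := Finset.sum_le_sum fun j _ => by
        by_cases hsj : s j = 1
        · rw [norm_mul, Complex.norm_real, Real.norm_eq_abs]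
          exact mul_le_mul (hcB j hsj) (abs_sub_le_adist hsj y z) (abs_nonneg _) hB
        · simp only [hc j hsj, zero_mul, norm_zero]
          exact mul_nonneg hB (adist_nonneg s y z)
    _ = d * B * adist s y z := by simp [mul_assoc]

lemma norm_coeff_le (hs : ∀ i, 0 < s i) (hα : 0 < α) (hαη : α ≤ η) (hη2 : η ≤ 2)
    (hM₁ : 0 ≤ M₁) (hM₂ : 0 ≤ M₂)
    (hU : ∀ x ∈ D, ∀ y ∈ D, ‖U x y‖ ≤ M₁ * adist s x y ^ η)
    (hP : ∀ z ∈ D, ‖U x z - U y z - P z‖ ≤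
      M₂ * adist s y z ^ α * (adist s x y + adist s y z) ^ (η - α))
    {a : ℂ} {c : Fin d → ℂ} (hPc : ∀ z, P z = a + ∑ j, c j * z j)
    (hx : x ∈ D) (hy : y ∈ D) (hxy : x ≠ y) {i : Fin d} (hsi : s i = 1)
    (hw : y + adist s x y • Pi.single i 1 ∈ D) :
    ‖c i‖ ≤ (6 * M₁ + 4 * M₂) * adist s x y ^ (η - 1) := by
  set t := adist s x y
  set w := y + t • (Pi.single i 1 : Fin d → ℝ)
  have ht : 0 < t := adist_pos_of_ne hxy
  have hη : 0 < η := hα.trans_le hαη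
  have hyw : adist s y w = t := adist_add_smul_single hs hsi ht.le y
  have hUxw : ‖U x w‖ ≤ 4 * M₁ * t ^ η := by
    have hxw : adist s x w ≤ 2 * t := (adist_triangle hs x y w).trans (by rw [hyw]; linarith)
    have := rpow_le_sq_mul_rpow (adist_nonneg s x w) hxw one_le_two hη.le hη2
    nlinarith [hU x hx w hw]
  have hUyw : ‖U y w‖ ≤ M₁ * t ^ η := hyw ▸ hU y hy w hw
  have hEw : ‖U x w - U y w - P w‖ ≤ 4 * M₂ * t ^ η := by
    have h2t := rpow_le_sq_mul_rpow (by positivity : 0 ≤ t + t) (by linarith : t + t ≤ 2 * t)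
      one_le_two (sub_nonneg.mpr hαη) (by linarith)
    have hsplit : t ^ α * t ^ (η - α) = t ^ η := by rw [← Real.rpow_add ht]; ring_nf
    calc ‖U x w - U y w - P w‖ ≤ M₂ * t ^ α * (t + t) ^ (η - α) := hyw ▸ hP w hw
      _ ≤ M₂ * t ^ α * (2 ^ 2 * t ^ (η - α)) := by gcongr
      _ = 4 * M₂ * t ^ η := by rw [← hsplit]; ring
  have hPw : P w - P y = c i * t := by
    rw [sub_eq_sum_of_affine hPc,
      Finset.sum_eq_single i (fun j _ hj => by simp [w, hj]) (by simp)]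
    simp [w]
  have hPy : P y = U x y :=
    apply_eq_of_germ_sub_bound hs hα hP hy (germ_apply_self hs hη hU hy)
  have hct : ‖c i‖ * t ≤ (6 * M₁ + 4 * M₂) * t ^ η := by
    have hid : c i * t = U x w + -U y w + -(U x w - U y w - P w) + -U x y := by
      rw [← hPw, hPy]; ring
    calc ‖c i‖ * t = ‖c i * t‖ := by simp [abs_of_pos ht]
      _ ≤ ‖U x w‖ + ‖U y w‖ + ‖U x w - U y w - P w‖ + ‖U x y‖ := by
          rw [hid]; exact norm_add₄_le.trans_eq (by simp only [norm_neg])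
      _ ≤ (6 * M₁ + 4 * M₂) * t ^ η := by linarith [hU x hx y hy]
  rwa [Real.rpow_sub_one ht.ne', ← mul_div_assoc, le_div_iff₀ ht]

lemma norm_germ_sub_le (hs : ∀ i, 0 < s i) (hα : 0 < α) (hαη : α ≤ η) (hη2 : η < 2)
    (hM₁ : 0 ≤ M₁) (hM₂ : 0 ≤ M₂)
    (hD : ∀ i : Fin d, s i = 1 → ∀ x ∈ D, ∀ y ∈ D,
      (y + adist s x y • (Pi.single i 1 : Fin d → ℝ)) ∈ D)
    (hU : ∀ x ∈ D, ∀ y ∈ D, ‖U x y‖ ≤ M₁ * adist s x y ^ η)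
    (hUP : ∀ x ∈ D, ∀ y ∈ D, ∃ P : (Fin d → ℝ) → ℂ, IsAnisoPoly s (⌊η⌋ : ℝ) P ∧ ∀ z ∈ D,
      ‖U x z - U y z - P z‖ ≤ M₂ * adist s y z ^ α * (adist s x y + adist s y z) ^ (η - α))
    (hx : x ∈ D) (hy : y ∈ D) (hz : z ∈ D) :
    ‖U x y - U x z‖ ≤ d * (6 * M₁ + 4 * M₂) * adist s x y ^ (η - 1) * adist s y z
      + M₁ * adist s y z ^ η
      + M₂ * adist s y z ^ α * (adist s x y + adist s y z) ^ (η - α) := by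
  have hη : 0 < η := hα.trans_le hαη
  have hUyz := hU y hy z hz
  have ht := adist_nonneg s x y
  have hr := adist_nonneg s y z
  have hlin : 0 ≤ d * (6 * M₁ + 4 * M₂) * adist s x y ^ (η - 1) * adist s y z := by positivity
  have hE : 0 ≤ M₂ * adist s y z ^ α * (adist s x y + adist s y z) ^ (η - α) := by positivity
  by_cases hxy : x = y
  · subst hxy
    rw [germ_apply_self hs hη hU hx, zero_sub, norm_neg]
    linarith
  obtain ⟨P, hPpoly, hP⟩ := hUP x hx y hy
  obtain ⟨a, c, hc, hPc⟩ := hPpoly.exists_affine hs ((Int.floor_le η).trans_lt hη2)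
  have hPyz : ‖P y - P z‖ ≤ d * ((6 * M₁ + 4 * M₂) * adist s x y ^ (η - 1)) * adist s y z :=
    norm_sub_le_of_affine hPc hc (by positivity)
      (fun i hsi => norm_coeff_le hs hα hαη hη2.le hM₁ hM₂ hU hP hPc hx hy hxy hsi
        (hD i hsi x hx y hy)) y z
  have hPy : P y = U x y := apply_eq_of_germ_sub_bound hs hα hP hy (germ_apply_self hs hη hU hy)
  have hid : U x y - U x z = (P y - P z) + -U y z + -(U x z - U y z - P z) := by
    rw [hPy]; ring
  calc ‖U x y - U x z‖ ≤ ‖P y - P z‖ + ‖U y z‖ + ‖U x z - U y z - P z‖ := by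
        rw [hid]; exact norm_add₃_le.trans_eq (by simp only [norm_neg])
    _ ≤ _ := by linarith [hP z hz]

end GermEstimates

lemma norm_germ_sub_bound_le {α η M₁ M₂ R t r : ℝ} (hα : 0 < α) (hα1 : α ≤ 1) (hη1 : 1 ≤ η)
    (hη2 : η ≤ 2) (hM₁ : 0 ≤ M₁) (hM₂ : 0 ≤ M₂) (hR : 0 < R) (ht : 0 ≤ t) (htR : t ≤ R)
    (hr : 0 ≤ r) (hrR : r ≤ 2 * R) :
    d * (6 * M₁ + 4 * M₂) * t ^ (η - 1) * r + M₁ * r ^ η + M₂ * r ^ α * (t + r) ^ (η - α)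
      ≤ (24 * d + 9) * (M₁ + M₂) * R ^ (η - α) * r ^ α := by
  have hsplit : ∀ e f : ℝ, e + f ≠ 0 → r ^ (e + f) = r ^ e * r ^ f :=
    fun e f h => Real.rpow_add' hr h
  have hlin : t ^ (η - 1) * r ≤ 4 * (R ^ (η - α) * r ^ α) := by
    have h1 : t ^ (η - 1) ≤ R ^ (η - 1) := Real.rpow_le_rpow ht htR (by linarith)
    have h2 : r ^ (1 - α) ≤ 2 ^ 2 * R ^ (1 - α) :=
      rpow_le_sq_mul_rpow hr hrR one_le_two (by linarith) (by linarith)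
    calc t ^ (η - 1) * r = t ^ (η - 1) * r ^ (1 - α) * r ^ α := by
          rw [mul_assoc, ← hsplit _ _ (by norm_num), sub_add_cancel, Real.rpow_one]
      _ ≤ R ^ (η - 1) * (2 ^ 2 * R ^ (1 - α)) * r ^ α := by gcongr
      _ = 4 * (R ^ (η - α) * r ^ α) := by
          rw [show η - α = (η - 1) + (1 - α) by ring, Real.rpow_add hR]; ring
  have hsup : M₁ * r ^ η ≤ 4 * M₁ * (R ^ (η - α) * r ^ α) := by
    have h := rpow_le_sq_mul_rpow hr hrR one_le_two (by linarith : 0 ≤ η - α) (by linarith)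
    calc M₁ * r ^ η = M₁ * r ^ α * r ^ (η - α) := by
          rw [mul_assoc, ← hsplit _ _ (by linarith), add_sub_cancel]
      _ ≤ M₁ * r ^ α * (2 ^ 2 * R ^ (η - α)) := by gcongr
      _ = 4 * M₁ * (R ^ (η - α) * r ^ α) := by ring
  have herr : M₂ * r ^ α * (t + r) ^ (η - α) ≤ 9 * M₂ * (R ^ (η - α) * r ^ α) := by
    have h := rpow_le_sq_mul_rpow (by positivity : 0 ≤ t + r) (by linarith : t + r ≤ 3 * R)
      (by norm_num) (by linarith : 0 ≤ η - α) (by linarith)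
    calc M₂ * r ^ α * (t + r) ^ (η - α) ≤ M₂ * r ^ α * (3 ^ 2 * R ^ (η - α)) := by gcongr
      _ = 9 * M₂ * (R ^ (η - α) * r ^ α) := by ring
  have hK : 0 ≤ R ^ (η - α) * r ^ α := by positivity
  have hd : (0 : ℝ) ≤ d := d.cast_nonneg
  nlinarith [mul_le_mul_of_nonneg_left hlin (by positivity : (0 : ℝ) ≤ d * (6 * M₁ + 4 * M₂)),
    mul_nonneg (mul_nonneg hd hM₂) hK, mul_nonneg hM₁ hK]

lemma holderSemi_le_ofReal {s : Fin d → ℕ} {A : Set (Fin d → ℝ)} {α K : ℝ}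
    {f : (Fin d → ℝ) → ℂ} (h : ∀ y ∈ A, ∀ z ∈ A, ‖f y - f z‖ ≤ K * adist s y z ^ α) :
    holderSemi s A α f ≤ ENNReal.ofReal K :=
  iSup_le fun y => iSup_le fun z => iSup_le fun hyz => ENNReal.ofReal_le_ofReal <| by
    rw [div_le_iff₀ (Real.rpow_pos_of_pos (adist_pos_of_ne hyz) α)]
    exact h y y.2 z z.2

lemma le_mul_iInf_add_iInf_mul {ι κ : Sort*} {c r u : ℝ≥0∞} (hc₀ : c ≠ 0) (hc : c ≠ ∞)
    (hr₀ : r ≠ 0) (hr : r ≠ ∞) {f : ι → ℝ≥0∞} {g : κ → ℝ≥0∞}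
    (h : ∀ i j, u ≤ c * (f i + g j) * r) : u ≤ c * (iInf f + iInf g) * r := by
  rw [ENNReal.iInf_add, ENNReal.mul_iInf_of_ne hc₀ hc, ENNReal.iInf_mul_of_ne hr₀ hr]
  refine le_iInf fun i => ?_
  rw [ENNReal.add_iInf, ENNReal.mul_iInf_of_ne hc₀ hc, ENNReal.iInf_mul_of_ne hr₀ hr]
  exact le_iInf (h i)

theorem holder_bound_of_germ_bounds_general
    (d : ℕ) (s : Fin d → ℕ) (hs : ∀ i, 0 < s i)
    (α η : ℝ) (hα : 0 < α) (hα1 : α < 1) (hη1 : 1 < η) (hη2 : η < 2) :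
    ∃ C > (0 : ℝ), ∀ D : Set (Fin d → ℝ),
      (∀ i : Fin d, s i = 1 → ∀ x ∈ D, ∀ y ∈ D,
        (y + adist s x y • (Pi.single i 1 : Fin d → ℝ)) ∈ D) →
      ∀ U : (Fin d → ℝ) → (Fin d → ℝ) → ℂ, IsGerm D U → ∀ R > (0 : ℝ),
        (⨆ x : D, holderSemi s (D ∩ aball s x.1 R) α (U x.1)) ≤
          ENNReal.ofReal C * (germNorm s D η U + germHA s D η α U) *
            ENNReal.ofReal (R ^ (η - α)) := by
  refine ⟨24 * d + 9, by positivity, fun D hD U _ R hR => ?_⟩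
  refine le_mul_iInf_add_iInf_mul (by positivity) ENNReal.ofReal_ne_top
    (by simpa using Real.rpow_pos_of_pos hR _) ENNReal.ofReal_ne_top
    fun ⟨M₁, hM₁, hU⟩ ⟨M₂, hM₂, hUP⟩ => ?_
  rw [← ENNReal.ofReal_add hM₁.le hM₂.le, ← ENNReal.ofReal_mul (by positivity),
    ← ENNReal.ofReal_mul (by positivity)]
  refine iSup_le fun x => holderSemi_le_ofReal fun y ⟨hy, hxy⟩ z ⟨hz, hxz⟩ => ?_
  have hyz : adist s y z ≤ 2 * R := by
    linarith [adist_triangle hs y x z, adist_comm s x y, show adist s x y < R from hxy,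
      show adist s x z < R from hxz]
  exact (norm_germ_sub_le hs hα (by linarith) hη2 hM₁.le hM₂.le hD hU hUP x.2 hy hz).trans
    (norm_germ_sub_bound_le hα hα1.le hη1.le hη2.le hM₁.le hM₂.le hR (adist_nonneg s x y)
      (le_of_lt hxy) (adist_nonneg s y z) hyz)

/-- From germ bounds to Hölder bounds, `0 < α < 1 < η < 2`. -/
theorem holder_bound_of_germ_bounds
    (d : ℕ) (hd : 1 ≤ d) (s : Fin d → ℕ) (hs : ∀ i, 0 < s i)
    (α η : ℝ) (hα : 0 < α) (hα1 : α < 1) (hη1 : 1 < η) (hη2 : η < 2) :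
    ∃ C > (0 : ℝ), ∀ D : Set (Fin d → ℝ),
      (∀ i : Fin d, s i = 1 → ∀ x ∈ D, ∀ y ∈ D,
        (y + adist s x y • (Pi.single i 1 : Fin d → ℝ)) ∈ D) →
      ∀ U : (Fin d → ℝ) → (Fin d → ℝ) → ℂ, IsGerm D U → ∀ R > (0 : ℝ),
        (⨆ x : D, holderSemi s (D ∩ aball s x.1 R) α (U x.1)) ≤
          ENNReal.ofReal C * (germNorm s D η U + germHA s D η α U) *
            ENNReal.ofReal (R ^ (η - α)) :=
  holder_bound_of_germ_bounds_general d s hs α η hα hα1 hη1 hη2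

end GermSchauder
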